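/- arXiv:1507.05449 — 3 statements merged into one kernel-verified Lean document; each statement's English description precedes it below -/
import Mathlib

section
/- Let X be an infinite-dimensional complex Banach space and T ∈ L(X). Suppose f is holomorphic on an open neighbourhood of σ(T), f(T) is Riesz, and f is not locally zero at any point of σ(T) (i.e., f does not vanish identically on any neighbourhood of a point of σ(T)). Then T is polynomially Riesz: there exists a nonzero polynomial P ∈ ℂ[X] with P(T) Riesz. -/
open Filter

/-- `T` is a Riesz operator: `T - λ·I` is Fredholm (finite-dimensional kernel and
cokernel) for every nonzero `λ ∈ ℂ`. -/
def IsRieszOperator {Y : Type*} [NormedAddCommGroup Y] [NormedSpace ℂ Y]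
    (T : Y →L[ℂ] Y) : Prop :=
  ∀ lam : ℂ, lam ≠ 0 →
    FiniteDimensional ℂ (LinearMap.ker ((T - lam • (1 : Y →L[ℂ] Y) : Y →L[ℂ] Y) : Y →ₗ[ℂ] Y)) ∧
    FiniteDimensional ℂ (Y ⧸ LinearMap.range ((T - lam • (1 : Y →L[ℂ] Y) : Y →L[ℂ] Y) : Y →ₗ[ℂ] Y))

/-- The restriction of `T` to an invariant subspace `p`. -/
def restrictOp {Y : Type*} [NormedAddCommGroup Y] [NormedSpace ℂ Y]
    (T : Y →L[ℂ] Y) (p : Submodule ℂ Y) (h : ∀ x ∈ p, T x ∈ p) : p →L[ℂ] p :=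
  ContinuousLinearMap.codRestrict (T.comp p.subtypeL) p (fun x => h x x.2)

/-- `Φ` is a holomorphic functional calculus for `a` on the open neighbourhood `U`
of the spectrum of `a`: a unital, multiplicative, linear assignment `f ↦ f(a)`
depending only on the values of `f` on `U`, sending `z ↦ z` to `a`, and satisfying
the spectral mapping theorem. -/
structure IsHolFC {A : Type*} [NormedRing A] [NormedAlgebra ℂ A] (a : A)
    (U : Set ℂ) (Φ : (ℂ → ℂ) → A) : Prop where
  isOpen : IsOpen U
  spectrum_subset : spectrum ℂ a ⊆ U
  map_one : Φ 1 = 1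
  map_id : Φ id = a
  map_add : ∀ f g : ℂ → ℂ, DifferentiableOn ℂ f U → DifferentiableOn ℂ g U →
    Φ (f + g) = Φ f + Φ g
  map_mul : ∀ f g : ℂ → ℂ, DifferentiableOn ℂ f U → DifferentiableOn ℂ g U →
    Φ (f * g) = Φ f * Φ g
  map_smul : ∀ (c : ℂ) (f : ℂ → ℂ), DifferentiableOn ℂ f U → Φ (c • f) = c • Φ f
  map_congr : ∀ f g : ℂ → ℂ, DifferentiableOn ℂ f U → DifferentiableOn ℂ g U →
    (∀ z ∈ U, f z = g z) → Φ f = Φ g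
  spectral_mapping : ∀ f : ℂ → ℂ, DifferentiableOn ℂ f U →
    spectrum ℂ (Φ f) = f '' spectrum ℂ a

/-- `T` is analytically Riesz: `f(T)` is Riesz for some `f` holomorphic on an
open neighbourhood of `σ(T)`. -/
def IsAnalyticallyRiesz {Y : Type*} [NormedAddCommGroup Y] [NormedSpace ℂ Y]
    [CompleteSpace Y] (T : Y →L[ℂ] Y) : Prop :=
  ∃ (U : Set ℂ) (Φ : (ℂ → ℂ) → (Y →L[ℂ] Y)) (f : ℂ → ℂ),
    IsHolFC T U Φ ∧ DifferentiableOn ℂ f U ∧ IsRieszOperator (Φ f)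

/-- `T` is polynomially Riesz: `P(T)` is Riesz for some nonzero polynomial `P`. -/
def IsPolynomiallyRiesz {Y : Type*} [NormedAddCommGroup Y] [NormedSpace ℂ Y]
    (T : Y →L[ℂ] Y) : Prop :=
  ∃ P : Polynomial ℂ, P ≠ 0 ∧ IsRieszOperator (Polynomial.aeval T P)


open LinearMap in
lemma fd_ext {M : Type*} [AddCommGroup M] [Module ℂ M] (p : Submodule ℂ M)
    (h1 : FiniteDimensional ℂ p) (h2 : FiniteDimensional ℂ (M ⧸ p)) :
    FiniteDimensional ℂ M := by
  apply Module.finite_def.mpr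
  apply Submodule.fg_of_fg_map_of_fg_inf_ker p.mkQ
  · rw [Submodule.map_top, Submodule.range_mkQ]
    exact Module.finite_def.mp h2
  · rw [top_inf_eq, Submodule.ker_mkQ]
    exact (Submodule.fg_iff_finiteDimensional p).mpr h1

open LinearMap in
lemma fd_of_ker_range {V W : Type*} [AddCommGroup V] [Module ℂ V] [AddCommGroup W] [Module ℂ W]
    (φ : V →ₗ[ℂ] W) (h1 : FiniteDimensional ℂ (ker φ)) (h2 : FiniteDimensional ℂ (range φ)) :
    FiniteDimensional ℂ V := by
  apply fd_ext (ker φ) h1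
  exact Module.Finite.equiv φ.quotKerEquivRange.symm

section FredSec
variable {Y : Type*} [NormedAddCommGroup Y] [NormedSpace ℂ Y]

def Fred (S : Y →L[ℂ] Y) : Prop :=
  FiniteDimensional ℂ (LinearMap.ker (S : Y →ₗ[ℂ] Y)) ∧ FiniteDimensional ℂ (Y ⧸ LinearMap.range (S : Y →ₗ[ℂ] Y))

lemma fred_of_bijective {S : Y →L[ℂ] Y} (h : Function.Bijective S) : Fred S := by
  constructor
  · rw [LinearMap.ker_eq_bot_of_injective h.injective]
    infer_instance
  · rw [LinearMap.range_eq_top_of_surjective _ h.surjective]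
    infer_instance

lemma fred_one : Fred (1 : Y →L[ℂ] Y) := fred_of_bijective Function.bijective_id

lemma fred_left_of_comm {A B : Y →L[ℂ] Y} (hc : A * B = B * A) (h : Fred (A * B)) : Fred A := by
  constructor
  · have := h.1
    refine Submodule.finiteDimensional_of_le (S₂ := LinearMap.ker ((A * B : Y →L[ℂ] Y) : Y →ₗ[ℂ] Y)) (fun x hx => ?_)
    simp only [LinearMap.mem_ker, ContinuousLinearMap.coe_coe] at *
    rw [hc]
    show B (A x) = 0
    rw [hx, map_zero]
  · have hle : LinearMap.range ((A * B : Y →L[ℂ] Y) : Y →ₗ[ℂ] Y) ≤ LinearMap.range (A : Y →ₗ[ℂ] Y) := by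
      rintro y ⟨x, rfl⟩
      exact ⟨B x, rfl⟩
    set r1 := LinearMap.range ((A * B : Y →L[ℂ] Y) : Y →ₗ[ℂ] Y)
    set rA := LinearMap.range ((A : Y →L[ℂ] Y) : Y →ₗ[ℂ] Y)
    have : Module.Finite ℂ (Y ⧸ r1) := h.2
    have hsurj : Function.Surjective (Submodule.mapQ r1 rA LinearMap.id hle) := by
      intro z
      obtain ⟨x, rfl⟩ := Submodule.mkQ_surjective rA z
      exact ⟨Submodule.mkQ r1 x, by simp [Submodule.mapQ_apply]⟩
    exact Module.Finite.of_surjective _ hsurj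

lemma fred_mul {A B : Y →L[ℂ] Y} (hA : Fred A) (hB : Fred B) : Fred (A * B) := by
  have hkA : FiniteDimensional ℂ (LinearMap.ker (A : Y →ₗ[ℂ] Y)) := hA.1
  have hkB : FiniteDimensional ℂ (LinearMap.ker (B : Y →ₗ[ℂ] Y)) := hB.1
  have hqB : FiniteDimensional ℂ (Y ⧸ LinearMap.range ((B : Y →L[ℂ] Y) : Y →ₗ[ℂ] Y)) := hB.2
  have hqA : FiniteDimensional ℂ (Y ⧸ LinearMap.range ((A : Y →L[ℂ] Y) : Y →ₗ[ℂ] Y)) := hA.2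
  constructor
  · -- kernel
    have hBA : ∀ x ∈ LinearMap.ker ((A * B : Y →L[ℂ] Y) : Y →ₗ[ℂ] Y),
        (B : Y →ₗ[ℂ] Y) x ∈ LinearMap.ker (A : Y →ₗ[ℂ] Y) := by
      intro x hx; simpa using hx
    apply fd_of_ker_range (LinearMap.restrict (B : Y →ₗ[ℂ] Y) hBA)
    · -- kernel of the restriction injects into ker B
      have hmem : ∀ x : LinearMap.ker (LinearMap.restrict (B : Y →ₗ[ℂ] Y) hBA),
          ((LinearMap.ker ((A * B : Y →L[ℂ] Y) : Y →ₗ[ℂ] Y)).subtype.comp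
            (LinearMap.ker (LinearMap.restrict (B : Y →ₗ[ℂ] Y) hBA)).subtype) x
            ∈ LinearMap.ker (B : Y →ₗ[ℂ] Y) := by
        rintro ⟨⟨x, hx⟩, hx2⟩
        have h3 := congrArg Subtype.val hx2
        exact h3
      apply Module.Finite.of_injective (LinearMap.codRestrict _ _ hmem)
      intro a b hab
      have h4 := congrArg Subtype.val hab
      exact Subtype.ext (Subtype.ext h4)
    · infer_instance
  · -- cokernel
    have hle : LinearMap.range ((A * B : Y →L[ℂ] Y) : Y →ₗ[ℂ] Y)
        ≤ LinearMap.range ((A : Y →L[ℂ] Y) : Y →ₗ[ℂ] Y) := by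
      rintro y ⟨x, rfl⟩; exact ⟨B x, rfl⟩
    have hle' : LinearMap.range ((A * B : Y →L[ℂ] Y) : Y →ₗ[ℂ] Y)
        ≤ (LinearMap.range ((A : Y →L[ℂ] Y) : Y →ₗ[ℂ] Y)).comap LinearMap.id := hle
    have h2 : LinearMap.range ((B : Y →L[ℂ] Y) : Y →ₗ[ℂ] Y)
        ≤ (LinearMap.range ((A * B : Y →L[ℂ] Y) : Y →ₗ[ℂ] Y)).comap (A : Y →ₗ[ℂ] Y) := by
      rintro y ⟨x, rfl⟩; exact ⟨x, rfl⟩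
    apply fd_of_ker_range (Submodule.mapQ _ _ LinearMap.id hle')
    · apply Submodule.finiteDimensional_of_le
        (S₂ := LinearMap.range (Submodule.mapQ _ _ (A : Y →ₗ[ℂ] Y) h2))
      rintro z hz
      obtain ⟨x, rfl⟩ := Submodule.mkQ_surjective _ z
      rw [LinearMap.mem_ker] at hz
      have hz' : Submodule.Quotient.mk x
          = (0 : Y ⧸ LinearMap.range ((A : Y →L[ℂ] Y) : Y →ₗ[ℂ] Y)) := hz
      have hx : x ∈ LinearMap.range ((A : Y →L[ℂ] Y) : Y →ₗ[ℂ] Y) :=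
        (Submodule.Quotient.mk_eq_zero _).mp hz'
      obtain ⟨y, hy⟩ := hx
      refine ⟨Submodule.Quotient.mk y, ?_⟩
      rw [Submodule.mapQ_apply, hy]
      rfl
    · infer_instance

end FredSec


lemma dslope_diffOn {U : Set ℂ} (hU : IsOpen U) (f : ℂ → ℂ) (hf : DifferentiableOn ℂ f U)
    (w : ℂ) : DifferentiableOn ℂ (dslope f w) U := by
  intro z hz
  rcases eq_or_ne z w with rfl | hzw
  · obtain ⟨p, hp⟩ := hf.analyticAt (hU.mem_nhds hz)
    exact (AnalyticAt.differentiableAt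
      ⟨p.fslope, hp.has_fpower_series_dslope_fslope⟩).differentiableWithinAt
  · exact ((differentiableAt_dslope_of_ne hzw).mpr
      (hf.differentiableAt (hU.mem_nhds hz))).differentiableWithinAt

lemma fred_list_prod {Y : Type*} [NormedAddCommGroup Y] [NormedSpace ℂ Y]
    (l : List (Y →L[ℂ] Y)) (h : ∀ S ∈ l, Fred S) : Fred l.prod := by
  induction l with
  | nil => simpa using fred_one
  | cons a l ih =>
    rw [List.prod_cons]
    exact fred_mul (h a (List.mem_cons_self)) (ih fun S hS => h S (List.mem_cons_of_mem a hS))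

/-- If `f(T)` is Riesz for some `f` holomorphic on a neighbourhood of
`σ(T)` which is not locally zero at any point of `σ(T)`, then `T` is polynomially Riesz. -/
theorem polynomiallyRiesz_of_not_locally_zero {X : Type*} [NormedAddCommGroup X]
    [NormedSpace ℂ X] [CompleteSpace X] (hX : ¬ FiniteDimensional ℂ X) (T : X →L[ℂ] X)
    (U : Set ℂ) (Φ : (ℂ → ℂ) → (X →L[ℂ] X)) (hΦ : IsHolFC T U Φ)
    (f : ℂ → ℂ) (hf : DifferentiableOn ℂ f U) (hR : IsRieszOperator (Φ f))
    (hnl : ∀ x ∈ spectrum ℂ T, ¬ (∀ᶠ z in nhds x, f z = 0)) :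
    IsPolynomiallyRiesz T := by
  classical
  have hU : IsOpen U := hΦ.isOpen
  -- Key claim: if `w ∈ U` and `f w ≠ 0` then `T - w • 1` is Fredholm.
  have key : ∀ w ∈ U, f w ≠ 0 → Fred (T - w • (1 : X →L[ℂ] X)) := by
    intro w hw hfw
    have hg : DifferentiableOn ℂ (dslope f w) U := dslope_diffOn hU f hf w
    have hlin : DifferentiableOn ℂ (fun z : ℂ => z - w) U :=
      (differentiable_id.sub_const w).differentiableOn
    have hone : DifferentiableOn ℂ (1 : ℂ → ℂ) U := by
      have : (1 : ℂ → ℂ) = fun _ => (1 : ℂ) := rfl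
      rw [this]; exact differentiableOn_const 1
    have hsmul1 : ∀ c : ℂ, DifferentiableOn ℂ (c • (1 : ℂ → ℂ)) U := by
      intro c
      have : (c • (1 : ℂ → ℂ)) = fun _ => c := by funext z; simp
      rw [this]; exact differentiableOn_const c
    have hPhi_lin : Φ (fun z : ℂ => z - w) = T - w • 1 := by
      have hid : (fun z : ℂ => z - w) = (id + (-w) • (1 : ℂ → ℂ)) := by
        funext z; simp [sub_eq_add_neg]
      rw [hid, hΦ.map_add id ((-w) • 1) differentiable_id.differentiableOn (hsmul1 _),
        hΦ.map_smul _ _ hone, hΦ.map_one, hΦ.map_id, neg_smul, ← sub_eq_add_neg]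
    have hstep2 : (fun z : ℂ => z - w) * dslope f w = fun z => f z - f w := by
      funext z
      have := sub_smul_dslope f w z
      simpa [smul_eq_mul] using this
    have hstep3 : (fun z : ℂ => f z - f w) = f + (-(f w)) • (1 : ℂ → ℂ) := by
      funext z; simp [sub_eq_add_neg]
    have hPhi_f : Φ ((fun z : ℂ => z - w) * dslope f w) = Φ f - f w • 1 := by
      rw [hstep2, hstep3, hΦ.map_add f _ hf (hsmul1 _), hΦ.map_smul _ _ hone, hΦ.map_one,
        neg_smul, ← sub_eq_add_neg]
    have hc1 : (T - w • 1) * Φ (dslope f w) = Φ f - f w • 1 := by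
      rw [← hPhi_lin, ← hΦ.map_mul _ _ hlin hg, hPhi_f]
    have hc2 : Φ (dslope f w) * (T - w • 1) = Φ f - f w • 1 := by
      rw [← hPhi_lin, ← hΦ.map_mul _ _ hg hlin, mul_comm (dslope f w) (fun z : ℂ => z - w),
        hPhi_f]
    have hfred : Fred (Φ f - f w • 1) := hR (f w) hfw
    exact fred_left_of_comm (hc1.trans hc2.symm) (by rw [hc1]; exact hfred)
  -- Fredholmness of `T - w • 1` for `w` outside the spectrum.
  have key' : ∀ w : ℂ, w ∉ spectrum ℂ T → Fred (T - w • (1 : X →L[ℂ] X)) := by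
    intro w hwn
    have hu : IsUnit (algebraMap ℂ (X →L[ℂ] X) w - T) := by
      rw [spectrum.notMem_iff] at hwn; exact hwn
    have hu' : IsUnit (T - w • (1 : X →L[ℂ] X)) := by
      have : T - w • (1 : X →L[ℂ] X) = -(algebraMap ℂ (X →L[ℂ] X) w - T) := by
        rw [Algebra.algebraMap_eq_smul_one]; exact (neg_sub _ _).symm
      rw [this]; exact hu.neg
    obtain ⟨u, hueq⟩ := hu'
    apply fred_of_bijective
    rw [← hueq]
    constructor
    · intro a b hab
      have h1 : ((↑u⁻¹ : X →L[ℂ] X) * ↑u) a = ((↑u⁻¹ : X →L[ℂ] X) * ↑u) b := by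
        simp only [ContinuousLinearMap.mul_apply, hab]
      rwa [u.inv_mul, ContinuousLinearMap.one_apply, ContinuousLinearMap.one_apply] at h1
    · intro y
      refine ⟨(↑u⁻¹ : X →L[ℂ] X) y, ?_⟩
      have h1 : ((↑u : X →L[ℂ] X) * ↑u⁻¹) y = y := by rw [u.mul_inv]; rfl
      rwa [ContinuousLinearMap.mul_apply] at h1
  -- The zeros of `f` on the spectrum form a finite set `t`.
  obtain ⟨t, -, hcover⟩ := (spectrum.isCompact T).elim_nhds_subcover
      (fun x => {z : ℂ | (f z = 0 ∧ z ∈ spectrum ℂ T) → z = x}) (by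
    intro x hx
    have hfa : AnalyticAt ℂ f x := hf.analyticAt (hU.mem_nhds (hΦ.spectrum_subset hx))
    rcases hfa.eventually_eq_zero_or_eventually_ne_zero with h | h
    · exact absurd h (hnl x hx)
    · rw [eventually_nhdsWithin_iff] at h
      filter_upwards [h] with z hz hz0
      by_contra hne
      exact hz (Set.mem_compl_singleton_iff.mpr hne) hz0.1)
  have hZ : ∀ z ∈ spectrum ℂ T, f z = 0 → z ∈ t := by
    intro z hzσ hz0
    obtain ⟨x, hxt, hxz⟩ := Set.mem_iUnion₂.mp (hcover hzσ)
    rw [hxz ⟨hz0, hzσ⟩]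
    exact hxt
  -- A point outside the spectrum.
  obtain ⟨c, hc⟩ : ∃ c : ℂ, c ∉ spectrum ℂ T := by
    by_contra h
    push_neg at h
    exact (spectrum.isCompact T).ne_univ (Set.eq_univ_of_forall h)
  -- The polynomial.
  set P : Polynomial ℂ := (Polynomial.X - Polynomial.C c) *
    ∏ z ∈ t, (Polynomial.X - Polynomial.C z) with hP
  have hmon : P.Monic := (Polynomial.monic_X_sub_C c).mul
    (Polynomial.monic_prod_of_monic _ _ fun z _ => Polynomial.monic_X_sub_C z)
  have hdeg : 1 ≤ P.natDegree := by
    rw [hP, (Polynomial.monic_X_sub_C c).natDegree_mul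
      (Polynomial.monic_prod_of_monic _ _ fun z _ => Polynomial.monic_X_sub_C z),
      Polynomial.natDegree_X_sub_C]
    omega
  refine ⟨P, hmon.ne_zero, ?_⟩
  intro lam hlam
  have hQmon : (P - Polynomial.C lam).Monic := by
    apply hmon.sub_of_left
    apply lt_of_le_of_lt (Polynomial.degree_C_le)
    rw [Polynomial.degree_eq_natDegree hmon.ne_zero]
    exact_mod_cast Nat.lt_of_lt_of_le Nat.zero_lt_one hdeg
  have hsplit : P - Polynomial.C lam =
      ((P - Polynomial.C lam).roots.map fun a => Polynomial.X - Polynomial.C a).prod :=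
    (IsAlgClosed.splits (P - Polynomial.C lam)).eq_prod_roots_of_monic hQmon
  have heval : Polynomial.aeval T P - lam • (1 : X →L[ℂ] X) =
      Polynomial.aeval T (P - Polynomial.C lam) := by
    rw [map_sub, Polynomial.aeval_C, Algebra.algebraMap_eq_smul_one]
  have hfredQ : Fred (Polynomial.aeval T (P - Polynomial.C lam)) := by
    rw [hsplit, ← Multiset.coe_toList (P - Polynomial.C lam).roots, Multiset.map_coe,
      Multiset.prod_coe, map_list_prod, List.map_map]
    apply fred_list_prod
    intro S hS
    obtain ⟨w, hwmem, rfl⟩ := List.mem_map.mp hS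
    have hwroot : w ∈ (P - Polynomial.C lam).roots := by
      rw [← Multiset.mem_toList]; exact hwmem
    have hweval : P.eval w = lam := by
      have := Polynomial.isRoot_of_mem_roots hwroot
      rw [Polynomial.IsRoot, Polynomial.eval_sub, Polynomial.eval_C, sub_eq_zero] at this
      exact this
    have hTw : (Polynomial.aeval T ∘ fun a => Polynomial.X - Polynomial.C a) w
        = T - w • (1 : X →L[ℂ] X) := by
      simp [Function.comp, Polynomial.aeval_X, Polynomial.aeval_C,
        Algebra.algebraMap_eq_smul_one]
    rw [hTw]
    by_cases hwσ : w ∈ spectrum ℂ T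
    · apply key w (hΦ.spectrum_subset hwσ)
      intro hfw0
      have hwt : w ∈ t := hZ w hwσ hfw0
      have : P.eval w = 0 := by
        rw [hP, Polynomial.eval_mul, Polynomial.eval_prod]
        have : ∏ z ∈ t, Polynomial.eval w (Polynomial.X - Polynomial.C z) = 0 :=
          Finset.prod_eq_zero hwt (by simp)
        rw [this, mul_zero]
      rw [hweval] at this
      exact hlam this
    · exact key' w hwσ
  rw [heval] at *
  exact ⟨hfredQ.1, hfredQ.2⟩
end

section
/- Let K ⊂ ℂ be compact and f holomorphic on an open neighbourhood of K with only finitely many zeros λ₁, …, λₙ in K, of orders k₁, …, kₙ. Then, after shrinking the neighbourhood, f(z) = (z − λ₁)^{k₁} ⋯ (z − λₙ)^{kₙ} g(z) for a holomorphic function g with g(z) ≠ 0 for all z ∈ K. -/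
open Filter

/-- If `f` is holomorphic near a compact set `K` with finitely many
zeros `λ₁, …, λₙ` in `K` of orders `k₁, …, kₙ`, then on a smaller neighbourhood
`f(z) = (z - λ₁)^(k₁) ⋯ (z - λₙ)^(kₙ) g(z)` with `g` holomorphic and nonvanishing on `K`. -/
theorem factor_zeros_on_compact (K U : Set ℂ) (f : ℂ → ℂ)
    (hK : IsCompact K) (hU : IsOpen U) (hKU : K ⊆ U) (hf : DifferentiableOn ℂ f U)
    (n : ℕ) (lam : Fin n → ℂ) (k : Fin n → ℕ)
    (hinj : Function.Injective lam) (hmem : ∀ i, lam i ∈ K)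
    (hzeros : {z ∈ K | f z = 0} = Set.range lam)
    (horder : ∀ (i : Fin n) (h : AnalyticAt ℂ f (lam i)), analyticOrderAt f (lam i) = (k i : ENat)) :
    ∃ V : Set ℂ, IsOpen V ∧ K ⊆ V ∧ V ⊆ U ∧
      ∃ g : ℂ → ℂ, DifferentiableOn ℂ g V ∧ (∀ z ∈ K, g z ≠ 0) ∧
        ∀ z ∈ V, f z = (∏ i, (z - lam i) ^ k i) * g z := by
  classical
  set p : ℂ → ℂ := fun z => ∏ i, (z - lam i) ^ k i with hp
  have hfz : ∀ i, f (lam i) = 0 := by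
    intro i
    have : lam i ∈ {z ∈ K | f z = 0} := hzeros ▸ Set.mem_range_self i
    exact this.2
  have hfa : ∀ i, AnalyticAt ℂ f (lam i) := fun i =>
    hf.analyticAt (hU.mem_nhds (hKU (hmem i)))
  have hex : ∀ i : Fin n, ∃ G : ℂ → ℂ, AnalyticAt ℂ G (lam i) ∧ G (lam i) ≠ 0 ∧
      ∀ᶠ z in nhds (lam i), f z = (z - lam i) ^ (k i) • G z :=
    fun i => ((hfa i).analyticOrderAt_eq_natCast (n := k i)).mp (horder i (hfa i))
  choose G hGa hG0 hGf using hex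
  have hk0 : ∀ i, k i ≠ 0 := by
    intro i hki
    have h1 : f (lam i) = (lam i - lam i) ^ (k i) • G i (lam i) := (hGf i).self_of_nhds
    rw [hfz i, hki, pow_zero, one_smul] at h1
    exact hG0 i h1.symm
  have hpz : ∀ z : ℂ, p z ≠ 0 ↔ z ∉ Set.range lam := by
    intro z
    constructor
    · rintro h ⟨i, rfl⟩
      apply h
      rw [hp]
      exact Finset.prod_eq_zero (Finset.mem_univ i) (by simp [zero_pow (hk0 i)])
    · intro h h0
      rw [hp, Finset.prod_eq_zero_iff] at h0
      obtain ⟨i, -, hi⟩ := h0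
      exact h ⟨i, (sub_eq_zero.mp (pow_eq_zero_iff (hk0 i) |>.mp hi)).symm⟩
  -- the auxiliary products
  set Q : Fin n → ℂ → ℂ := fun i z => ∏ j ∈ Finset.univ.erase i, (z - lam j) ^ k j with hQ
  have hpQ : ∀ i z, p z = (z - lam i) ^ k i * Q i z := by
    intro i z
    rw [hp, hQ]
    exact (Finset.mul_prod_erase Finset.univ _ (Finset.mem_univ i)).symm
  have hQ0 : ∀ i, Q i (lam i) ≠ 0 := by
    intro i
    rw [hQ]
    refine Finset.prod_ne_zero_iff.mpr fun j hj => ?_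
    have : lam i ≠ lam j := fun h => (Finset.mem_erase.mp hj).1 (hinj h).symm
    exact pow_ne_zero _ (sub_ne_zero.mpr this)
  have hQdiff : ∀ i z, DifferentiableAt ℂ (Q i) z := by
    intro i z
    rw [hQ]
    exact DifferentiableAt.fun_finsetProd fun j _ =>
      ((differentiableAt_id.sub_const _).pow _)
  have hpdiff : ∀ z, DifferentiableAt ℂ p z := by
    intro z
    rw [hp]
    exact DifferentiableAt.fun_finsetProd fun j _ =>
      ((differentiableAt_id.sub_const _).pow _)
  -- define g
  set g : ℂ → ℂ := fun z =>
    if h : ∃ i, lam i = z then G h.choose z / Q h.choose z else f z / p z with hg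
  have hgval : ∀ i, g (lam i) = G i (lam i) / Q i (lam i) := by
    intro i
    have hex' : ∃ j, lam j = lam i := ⟨i, rfl⟩
    have : hex'.choose = i := hinj hex'.choose_spec
    rw [hg]
    simp only [dif_pos hex', this]
  have hgout : ∀ z, z ∉ Set.range lam → g z = f z / p z := by
    intro z hz
    rw [hg]
    have : ¬ ∃ i, lam i = z := fun ⟨i, hi⟩ => hz ⟨i, hi⟩
    simp only [dif_neg this]
  -- g eventually equals G i / Q i near lam i
  have hkey : ∀ i, g =ᶠ[nhds (lam i)] fun z => G i z / Q i z := by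
    intro i
    have hne : ∀ᶠ z in nhds (lam i), ∀ j, lam j = z → j = i := by
      rw [eventually_all]
      intro j
      by_cases hj : j = i
      · exact Eventually.of_forall fun z _ => hj
      · have : lam i ≠ lam j := fun h => hj (hinj h.symm)
        filter_upwards [eventually_ne_nhds this] with z hz hzj
        exact absurd hzj.symm hz
    filter_upwards [hGf i, hne] with z hfz' hne'
    by_cases hz : ∃ j, lam j = z
    · obtain ⟨j, hj⟩ := hz
      have hji : j = i := hne' j hj
      subst hji
      subst hj
      exact hgval j
    · have hzr : z ∉ Set.range lam := fun ⟨j, hj⟩ => hz ⟨j, hj⟩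
      rw [hgout z hzr, hfz', hpQ i z, smul_eq_mul]
      have hzi : z - lam i ≠ 0 := sub_ne_zero.mpr fun h => hz ⟨i, h.symm⟩
      rw [mul_comm ((z - lam i) ^ k i) (G i z)]
      rw [mul_comm ((z - lam i) ^ k i) (Q i z)]
      rw [mul_div_mul_right _ _ (pow_ne_zero _ hzi)]
  -- differentiability
  have hgdiff : DifferentiableOn ℂ g U := by
    intro z hz
    by_cases hzr : z ∈ Set.range lam
    · obtain ⟨i, rfl⟩ := hzr
      have hd : DifferentiableAt ℂ (fun z => G i z / Q i z) (lam i) :=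
        ((hGa i).differentiableAt).div (hQdiff i _) (hQ0 i)
      exact (hd.congr_of_eventuallyEq (hkey i)).differentiableWithinAt
    · have hop : IsOpen (U \ Set.range lam) :=
        hU.sdiff ((Set.finite_range lam).isClosed)
      have hmem' : U \ Set.range lam ∈ nhds z := hop.mem_nhds ⟨hz, hzr⟩
      have hd : DifferentiableAt ℂ (fun z => f z / p z) z :=
        (hf.differentiableAt (hU.mem_nhds hz)).div (hpdiff z) ((hpz z).mpr hzr)
      have heq : g =ᶠ[nhds z] fun z => f z / p z := by
        filter_upwards [hmem'] with w hw
        exact hgout w hw.2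
      exact (hd.congr_of_eventuallyEq heq).differentiableWithinAt
  refine ⟨U, hU, hKU, le_refl U, g, hgdiff, ?_, ?_⟩
  · intro z hzK
    by_cases hzr : z ∈ Set.range lam
    · obtain ⟨i, rfl⟩ := hzr
      rw [hgval i]
      exact div_ne_zero (hG0 i) (hQ0 i)
    · have hfz' : f z ≠ 0 := by
        intro h0
        exact hzr (hzeros ▸ (⟨hzK, h0⟩ : z ∈ {z ∈ K | f z = 0}))
      rw [hgout z hzr]
      exact div_ne_zero hfz' ((hpz z).mpr hzr)
  · intro z hzU
    by_cases hzr : z ∈ Set.range lam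
    · obtain ⟨i, rfl⟩ := hzr
      rw [hfz i, Finset.prod_eq_zero (Finset.mem_univ i) (by simp [zero_pow (hk0 i)]),
        zero_mul]
    · have hpzne : p z ≠ 0 := (hpz z).mpr hzr
      have : f z = p z * g z := by
        rw [hgout z hzr]
        field_simp
      simpa [hp] using this
end

section
/- Let X = X₁ ⊕ X₂ be a direct sum of closed subspaces of a Banach space and S = S₁ ⊕ S₂ a bounded operator respecting the decomposition. Then S is a Riesz operator if and only if both S₁ and S₂ are Riesz operators. -/
open Filter

def prodSubEquiv {R M N : Type*} [Ring R] [AddCommGroup M] [AddCommGroup N]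
    [Module R M] [Module R N] (p : Submodule R M) (q : Submodule R N) :
    (p.prod q) ≃ₗ[R] p × q where
  toFun x := (⟨x.1.1, x.2.1⟩, ⟨x.1.2, x.2.2⟩)
  invFun x := ⟨(x.1.1, x.2.1), ⟨x.1.2, x.2.2⟩⟩
  map_add' _ _ := rfl
  map_smul' _ _ := rfl
  left_inv _ := rfl
  right_inv _ := rfl

lemma fd_prod_iff {A B : Type*} [AddCommGroup A] [AddCommGroup B]
    [Module ℂ A] [Module ℂ B] :
    FiniteDimensional ℂ (A × B) ↔ FiniteDimensional ℂ A ∧ FiniteDimensional ℂ B := by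
  constructor
  · intro h
    exact ⟨FiniteDimensional.of_injective (LinearMap.inl ℂ A B) LinearMap.inl_injective,
      FiniteDimensional.of_injective (LinearMap.inr ℂ A B) LinearMap.inr_injective⟩
  · rintro ⟨h1, h2⟩; infer_instance

noncomputable def quotProdEquiv {M N : Type*} [AddCommGroup M] [AddCommGroup N]
    [Module ℂ M] [Module ℂ N] (p : Submodule ℂ M) (q : Submodule ℂ N) :
    ((M × N) ⧸ p.prod q) ≃ₗ[ℂ] (M ⧸ p) × (N ⧸ q) := by
  have hk : LinearMap.ker (LinearMap.prodMap p.mkQ q.mkQ) = p.prod q := by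
    rw [LinearMap.ker_prodMap, Submodule.ker_mkQ, Submodule.ker_mkQ]
  have hs : Function.Surjective (LinearMap.prodMap p.mkQ q.mkQ) := by
    intro x
    obtain ⟨a, ha⟩ := p.mkQ_surjective x.1
    obtain ⟨b, hb⟩ := q.mkQ_surjective x.2
    exact ⟨(a, b), by simp [ha, hb]⟩
  exact (Submodule.quotEquivOfEq _ _ hk.symm).trans
    (LinearMap.quotKerEquivOfSurjective _ hs)

lemma range_prodMap' {R M N M' N' : Type*} [Ring R] [AddCommGroup M] [AddCommGroup N]
    [AddCommGroup M'] [AddCommGroup N'] [Module R M] [Module R N] [Module R M'] [Module R N']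
    (f : M →ₗ[R] M') (g : N →ₗ[R] N') :
    LinearMap.range (f.prodMap g) = (LinearMap.range f).prod (LinearMap.range g) := by
  ext ⟨a, b⟩
  simp only [LinearMap.mem_range, Submodule.mem_prod]
  constructor
  · rintro ⟨⟨x, y⟩, h⟩
    exact ⟨⟨x, congrArg Prod.fst h⟩, ⟨y, congrArg Prod.snd h⟩⟩
  · rintro ⟨⟨x, hx⟩, ⟨y, hy⟩⟩
    exact ⟨(x, y), by simp [hx, hy]⟩

lemma fd_equiv_iff {A B : Type*} [AddCommGroup A] [AddCommGroup B]
    [Module ℂ A] [Module ℂ B] (e : A ≃ₗ[ℂ] B) :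
    FiniteDimensional ℂ A ↔ FiniteDimensional ℂ B :=
  ⟨fun _ => Module.Finite.equiv e, fun _ => Module.Finite.equiv e.symm⟩

lemma fd_decomp {X : Type*} [AddCommGroup X] [Module ℂ X]
    (X₁ X₂ : Submodule ℂ X) (hcompl : IsCompl X₁ X₂)
    (T : X →ₗ[ℂ] X) (T₁ : X₁ →ₗ[ℂ] X₁) (T₂ : X₂ →ₗ[ℂ] X₂)
    (hcomm : ∀ (x₁ : X₁) (x₂ : X₂), T ((x₁ : X) + (x₂ : X)) = (T₁ x₁ : X) + (T₂ x₂ : X)) :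
    (FiniteDimensional ℂ (LinearMap.ker T) ∧ FiniteDimensional ℂ (X ⧸ LinearMap.range T)) ↔
    ((FiniteDimensional ℂ (LinearMap.ker T₁) ∧
        FiniteDimensional ℂ (X₁ ⧸ LinearMap.range T₁)) ∧
     (FiniteDimensional ℂ (LinearMap.ker T₂) ∧
        FiniteDimensional ℂ (X₂ ⧸ LinearMap.range T₂))) := by
  let e := Submodule.prodEquivOfIsCompl X₁ X₂ hcompl
  let P : X₁ × X₂ →ₗ[ℂ] X₁ × X₂ := T₁.prodMap T₂
  have hcomm' : ∀ pq : X₁ × X₂, T (e pq) = e (P pq) := by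
    rintro ⟨a, b⟩
    simp only [e, P, Submodule.coe_prodEquivOfIsCompl', LinearMap.prodMap_apply]
    exact hcomm a b
  have hTeq : T = (↑e : X₁ × X₂ →ₗ[ℂ] X) ∘ₗ (P ∘ₗ (↑e.symm : X →ₗ[ℂ] X₁ × X₂)) := by
    ext x
    have h := hcomm' (e.symm x)
    rw [e.apply_symm_apply] at h
    simpa using h
  have hker : LinearMap.ker T = Submodule.map (↑e : X₁ × X₂ →ₗ[ℂ] X) (LinearMap.ker P) := by
    rw [hTeq, LinearMap.ker_comp, LinearEquiv.ker, Submodule.comap_bot, LinearMap.ker_comp]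
    have h2 := Submodule.comap_equiv_eq_map_symm e.symm (LinearMap.ker P)
    rw [LinearEquiv.symm_symm] at h2
    exact h2
  have hrange : LinearMap.range T
      = Submodule.map (↑e : X₁ × X₂ →ₗ[ℂ] X) (LinearMap.range P) := by
    rw [hTeq, LinearMap.range_comp, LinearMap.range_comp, LinearEquiv.range,
      Submodule.map_top]
  have keq : FiniteDimensional ℂ (LinearMap.ker T)
      ↔ FiniteDimensional ℂ (LinearMap.ker P) := by
    rw [hker]
    exact (fd_equiv_iff (e.submoduleMap (LinearMap.ker P))).symm
  have qeq : FiniteDimensional ℂ (X ⧸ LinearMap.range T)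
      ↔ FiniteDimensional ℂ ((X₁ × X₂) ⧸ LinearMap.range P) :=
    (fd_equiv_iff (Submodule.Quotient.equiv (LinearMap.range P) (LinearMap.range T) e
      hrange.symm)).symm
  have kPeq : FiniteDimensional ℂ (LinearMap.ker P) ↔
      FiniteDimensional ℂ (LinearMap.ker T₁) ∧ FiniteDimensional ℂ (LinearMap.ker T₂) := by
    rw [show LinearMap.ker P = (LinearMap.ker T₁).prod (LinearMap.ker T₂) from
      LinearMap.ker_prodMap T₁ T₂]
    exact (fd_equiv_iff (prodSubEquiv _ _)).trans fd_prod_iff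
  have qPeq : FiniteDimensional ℂ ((X₁ × X₂) ⧸ LinearMap.range P) ↔
      FiniteDimensional ℂ (X₁ ⧸ LinearMap.range T₁) ∧
      FiniteDimensional ℂ (X₂ ⧸ LinearMap.range T₂) := by
    rw [show LinearMap.range P = (LinearMap.range T₁).prod (LinearMap.range T₂) from
      range_prodMap' T₁ T₂]
    exact (fd_equiv_iff (quotProdEquiv (LinearMap.range T₁) (LinearMap.range T₂))).trans fd_prod_iff
  rw [keq, qeq, kPeq, qPeq]
  tauto

/-- A direct sum `S = S₁ ⊕ S₂` is Riesz iff both summands are Riesz. -/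
theorem riesz_directSum_iff {X : Type*} [NormedAddCommGroup X] [NormedSpace ℂ X]
    [CompleteSpace X] (X₁ X₂ : Submodule ℂ X)
    (hc₁ : IsClosed (X₁ : Set X)) (hc₂ : IsClosed (X₂ : Set X)) (hcompl : IsCompl X₁ X₂)
    (S : X →L[ℂ] X) (h₁ : ∀ x ∈ X₁, S x ∈ X₁) (h₂ : ∀ x ∈ X₂, S x ∈ X₂) :
    IsRieszOperator S ↔
      IsRieszOperator (restrictOp S X₁ h₁) ∧ IsRieszOperator (restrictOp S X₂ h₂) := by
  have key : ∀ lam : ℂ,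
      (FiniteDimensional ℂ (LinearMap.ker ((S - lam • (1 : X →L[ℂ] X) : X →L[ℂ] X) : X →ₗ[ℂ] X)) ∧
       FiniteDimensional ℂ (X ⧸ LinearMap.range ((S - lam • (1 : X →L[ℂ] X) : X →L[ℂ] X) : X →ₗ[ℂ] X))) ↔
      ((FiniteDimensional ℂ
          (LinearMap.ker ((restrictOp S X₁ h₁ - lam • (1 : X₁ →L[ℂ] X₁) : X₁ →L[ℂ] X₁) : X₁ →ₗ[ℂ] X₁)) ∧
        FiniteDimensional ℂ
          (X₁ ⧸ LinearMap.range ((restrictOp S X₁ h₁ - lam • (1 : X₁ →L[ℂ] X₁) : X₁ →L[ℂ] X₁) : X₁ →ₗ[ℂ] X₁))) ∧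
       (FiniteDimensional ℂ
          (LinearMap.ker ((restrictOp S X₂ h₂ - lam • (1 : X₂ →L[ℂ] X₂) : X₂ →L[ℂ] X₂) : X₂ →ₗ[ℂ] X₂)) ∧
        FiniteDimensional ℂ
          (X₂ ⧸ LinearMap.range ((restrictOp S X₂ h₂ - lam • (1 : X₂ →L[ℂ] X₂) : X₂ →L[ℂ] X₂) : X₂ →ₗ[ℂ] X₂)))) := by
    intro lam
    refine fd_decomp X₁ X₂ hcompl
      ((S - lam • (1 : X →L[ℂ] X)) : X →ₗ[ℂ] X)
      ((restrictOp S X₁ h₁ - lam • (1 : X₁ →L[ℂ] X₁)) : X₁ →ₗ[ℂ] X₁)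
      ((restrictOp S X₂ h₂ - lam • (1 : X₂ →L[ℂ] X₂)) : X₂ →ₗ[ℂ] X₂) ?_
    intro x₁ x₂
    simp only [restrictOp, ContinuousLinearMap.coe_coe, ContinuousLinearMap.sub_apply,
      ContinuousLinearMap.smul_apply, ContinuousLinearMap.one_apply,
      ContinuousLinearMap.coe_codRestrict_apply, ContinuousLinearMap.coe_comp',
      Function.comp_apply, Submodule.coe_subtypeL', Submodule.coe_subtype,
      AddSubgroupClass.coe_sub, SetLike.val_smul, map_add, smul_add]
    abel
  unfold IsRieszOperator
  constructor
  · intro h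
    exact ⟨fun lam hl => ((key lam).mp (h lam hl)).1,
      fun lam hl => ((key lam).mp (h lam hl)).2⟩
  · rintro ⟨ha, hb⟩ lam hl
    exact (key lam).mpr ⟨ha lam hl, hb lam hl⟩
end
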